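/- arXiv:2312.08123 — 5 statements merged into one kernel-verified Lean document; each statement's English description precedes it below -/
import Mathlib

section
/- For f a smooth compactly supported function on ℝ², the Fourier transform in the s-variable of the Radon transform Rf(s,ω) satisfies (Rf)~(σ,ω) = f̂(σ ω^⊥), where f̂ is the 2D Fourier transform of f and ω^⊥ is ω rotated counterclockwise by 90°. -/
open MeasureTheory Complex

/-- Rotation of `ω ∈ ℝ²` counterclockwise by 90 degrees. -/
noncomputable def perp (ω : ℝ × ℝ) : ℝ × ℝ := (-ω.2, ω.1)

/-- Euclidean dot product on `ℝ²`. -/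
noncomputable def dot2 (x y : ℝ × ℝ) : ℝ := x.1 * y.1 + x.2 * y.2

/-- The Radon transform of `f`: the integral of `f` over the line with direction `ω`
and signed distance `s` from the origin. -/
noncomputable def radonTransform (f : ℝ × ℝ → ℂ) (s : ℝ) (ω : ℝ × ℝ) : ℂ :=
  ∫ t : ℝ, f (s • perp ω + t • ω)

/-- The 2D Fourier transform with convention `f̂(ξ) = ∫ e^{-i x·ξ} f(x) dx`. -/
noncomputable def fourier2 (f : ℝ × ℝ → ℂ) (ξ : ℝ × ℝ) : ℂ :=
  ∫ x : ℝ × ℝ, Complex.exp (-Complex.I * (dot2 x ξ : ℝ)) * f x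

/-- The rotation sending (s,t) to s•perp ω + t•ω, as a linear equiv. -/
noncomputable def rotEquiv (ω : ℝ × ℝ) (hω : ω.1 ^ 2 + ω.2 ^ 2 = 1) :
    (ℝ × ℝ) ≃ₗ[ℝ] (ℝ × ℝ) where
  toFun p := p.1 • perp ω + p.2 • ω
  invFun x := (dot2 x (perp ω), dot2 x ω)
  map_add' p q := by simp [perp, Prod.ext_iff]; constructor <;> ring
  map_smul' c p := by simp [perp, Prod.ext_iff]; constructor <;> ring
  left_inv p := by
    simp only [perp, dot2, Prod.ext_iff, Prod.smul_mk, Prod.fst_add, Prod.snd_add, smul_eq_mul,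
      Prod.smul_fst, Prod.smul_snd]
    constructor
    · linear_combination p.1 * hω
    · linear_combination p.2 * hω
  right_inv x := by
    simp only [perp, dot2, Prod.ext_iff, Prod.smul_mk, Prod.fst_add, Prod.snd_add, smul_eq_mul,
      Prod.smul_fst, Prod.smul_snd]
    constructor
    · linear_combination x.1 * hω
    · linear_combination x.2 * hω


/-- Fourier slice theorem: the 1D Fourier transform in `s` of the Radon transform of `f`
equals the 2D Fourier transform of `f` evaluated at `σ ω^⊥`. -/
theorem fourier_slice (f : ℝ × ℝ → ℂ) (hf : ContDiff ℝ (⊤ : ℕ∞) f)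
    (hsupp : HasCompactSupport f) (ω : ℝ × ℝ) (hω : ω.1 ^ 2 + ω.2 ^ 2 = 1) (σ : ℝ) :
    (∫ s : ℝ, Complex.exp (-Complex.I * (σ * s : ℝ)) * radonTransform f s ω)
      = fourier2 f (σ • perp ω) := by
  set e := rotEquiv ω hω with he
  have hdet : LinearMap.det (e : (ℝ × ℝ) →ₗ[ℝ] (ℝ × ℝ)) = -1 := by
    have : LinearMap.toMatrix (Module.Basis.finTwoProd ℝ) (Module.Basis.finTwoProd ℝ)
        (e : (ℝ × ℝ) →ₗ[ℝ] (ℝ × ℝ)) = !![-ω.2, ω.1; ω.1, ω.2] := by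
      ext i j
      fin_cases i <;> fin_cases j <;>
        simp [LinearMap.toMatrix_apply, rotEquiv, perp, Module.Basis.finTwoProd, e]
    rw [← LinearMap.det_toMatrix (Module.Basis.finTwoProd ℝ), this, Matrix.det_fin_two_of]
    linear_combination -hω
  have hmp : MeasurePreserving e volume volume := by
    constructor
    · exact (e.toContinuousLinearEquiv : (ℝ×ℝ) ≃L[ℝ] (ℝ×ℝ)).continuous.measurable
    · rw [show ⇑e = ((e : (ℝ × ℝ) →ₗ[ℝ] (ℝ × ℝ)) : (ℝ×ℝ) → (ℝ×ℝ)) from rfl,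
        Measure.map_linearMap_addHaar_eq_smul_addHaar volume (by rw [hdet]; norm_num), hdet]
      norm_num
  have hme : MeasurableEmbedding (⇑e) :=
    e.toContinuousLinearEquiv.toHomeomorph.measurableEmbedding
  -- the integrand over ℝ×ℝ
  set g : ℝ × ℝ → ℂ := fun p => Complex.exp (-Complex.I * (σ * p.1 : ℝ)) * f (e p) with hg
  have hgc : Continuous g := by
    apply Continuous.mul
    · exact (Complex.continuous_exp.comp (by continuity))
    · exact hf.continuous.comp e.toContinuousLinearEquiv.continuous
  have hgsupp : HasCompactSupport g := by
    apply HasCompactSupport.mul_left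
    exact hsupp.comp_homeomorph e.toContinuousLinearEquiv.toHomeomorph
  have hgint : Integrable g := hgc.integrable_of_hasCompactSupport hgsupp
  have hgint' : Integrable (Function.uncurry fun s t => g (s, t))
      ((volume : Measure ℝ).prod volume) := by
    rw [← Measure.volume_eq_prod]; exact hgint
  have key : (∫ p : ℝ × ℝ, g p)
      = ∫ s : ℝ, ∫ t : ℝ, g (s, t) := by
    rw [Measure.volume_eq_prod]
    exact (MeasureTheory.integral_integral hgint').symm
  have key2 : (∫ s : ℝ, Complex.exp (-Complex.I * (σ * s : ℝ)) * radonTransform f s ω)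
      = ∫ s : ℝ, ∫ t : ℝ, g (s, t) := by
    congr 1
    ext s
    rw [radonTransform, ← MeasureTheory.integral_const_mul]
    simp only [hg, he, rotEquiv, LinearEquiv.coe_mk, LinearMap.coe_mk, AddHom.coe_mk, Equiv.coe_fn_mk]
  rw [key2, ← key]
  have := hmp.integral_comp hme (fun x => Complex.exp (-Complex.I * (dot2 x (σ • perp ω) : ℝ)) * f x)
  rw [fourier2, ← this]
  congr 1
  ext p
  have hdot : dot2 (e p) (σ • perp ω) = σ * p.1 := by
    simp only [rotEquiv, dot2, perp, e, LinearEquiv.coe_mk, LinearMap.coe_mk, AddHom.coe_mk, Equiv.coe_fn_mk, Prod.smul_mk,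
      Prod.fst_add, Prod.snd_add, smul_eq_mul, Prod.smul_fst, Prod.smul_snd]
    linear_combination (σ * p.1) * hω
  rw [hg]
  simp [hdot]
end

section
/- If f ∈ C_c^∞(ℝ²) satisfies Rf(s,ω) = 0 for all s ∈ ℝ and ω ∈ S¹, then f = 0. -/
open MeasureTheory Complex FourierTransform RealInnerProductSpace

/-- Uniqueness for the Radon transform: if `f ∈ C_c^∞(ℝ²)` has vanishing Radon
transform for all lines, then `f = 0`. -/
theorem radon_injective (f : ℝ × ℝ → ℂ) (hf : ContDiff ℝ (⊤ : ℕ∞) f)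
    (hsupp : HasCompactSupport f)
    (h : ∀ (s : ℝ) (ω : ℝ × ℝ), ω.1 ^ 2 + ω.2 ^ 2 = 1 → radonTransform f s ω = 0) :
    f = 0 := by
  have hfc : Continuous f := hf.continuous
  have hfint : Integrable f := hfc.integrable_of_hasCompactSupport hsupp
  set g : ℂ → ℂ := fun z => f (z.re, z.im) with hgdef
  have hgc : Continuous g := hfc.comp (Complex.continuous_re.prodMk Complex.continuous_im)
  have hgint : Integrable g :=
    (Complex.volume_preserving_equiv_real_prod.integrable_comp_emb
      Complex.measurableEquivRealProd.measurableEmbedding).2 hfint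
  have key : ∀ ξ : ℂ, 𝓕 g ξ = 0 := by
    intro ξ
    obtain ⟨w, hw, r, hξ⟩ : ∃ w : ℂ, ‖w‖ = 1 ∧ ∃ r : ℝ, ξ = w * r := by
      rcases eq_or_ne ξ 0 with h0 | h0
      · exact ⟨1, by simp, 0, by simp [h0]⟩
      · have hn : (‖ξ‖ : ℂ) ≠ 0 := by
          simpa using norm_ne_zero_iff.mpr h0
        refine ⟨‖ξ‖⁻¹ • ξ, ?_, ‖ξ‖, ?_⟩
        · rw [norm_smul, Real.norm_eq_abs, _root_.abs_of_nonneg (inv_nonneg.mpr (norm_nonneg ξ))]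
          exact inv_mul_cancel₀ (norm_ne_zero_iff.mpr h0)
        · rw [Complex.real_smul, Complex.ofReal_inv, inv_mul_eq_div, div_mul_cancel₀ _ hn]
    set c : Circle := ⟨w, mem_sphere_zero_iff_norm.mpr hw⟩ with hc
    set ω : ℝ × ℝ := (w.re, w.im) with hωdef
    have hnsq : w.re ^ 2 + w.im ^ 2 = 1 := by
      have : ‖w‖ = 1 := hw
      have := Complex.sq_norm w
      rw [this] at *
      simp [Complex.normSq_apply, hw] at *
      nlinarith [Complex.sq_norm w, Complex.normSq_apply w]
    have hω1 : (perp ω).1 ^ 2 + (perp ω).2 ^ 2 = 1 := by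
      simp only [perp, hωdef]
      nlinarith [hnsq]
    set Θ : ℝ × ℝ → ℂ := fun p => (rotation c) (Complex.measurableEquivRealProd.symm p) with hΘ
    have mp : MeasurePreserving Θ volume volume :=
      ((rotation c).measurePreserving).comp Complex.volume_preserving_equiv_real_prod.symm
    have emb : MeasurableEmbedding Θ :=
      ((rotation c).toHomeomorph.toMeasurableEquiv.measurableEmbedding).comp
        Complex.measurableEquivRealProd.symm.measurableEmbedding
    have hP : Integrable (fun p : ℝ × ℝ => Real.fourierChar (-⟪Θ p, ξ⟫) • g (Θ p)) :=
      (mp.integrable_comp_emb emb).2 ((Real.fourierIntegral_convergent_iff ξ).2 hgint)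
    have point : ∀ p : ℝ × ℝ,
        Real.fourierChar (-⟪Θ p, ξ⟫) • g (Θ p)
          = (Real.fourierChar (-(p.1 * r)) : ℂ) * f ((-p.1) • perp (perp ω) + p.2 • perp ω) := by
      intro p
      have h1 : ⟪Θ p, ξ⟫ = p.1 * r := by
        have hrot : ξ = (rotation c) (r : ℂ) := by
          rw [rotation_apply, hc, hξ]
        rw [hΘ, hrot, LinearIsometryEquiv.inner_map_map]
        simp [Complex.inner]
        ring
      have h2 : g (Θ p) = f ((-p.1) • perp (perp ω) + p.2 • perp ω) := by
        have harg : (((Θ p).re : ℝ), (Θ p).im) = (-p.1) • perp (perp ω) + p.2 • perp ω := by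
          simp only [hΘ, rotation_apply, show (c : ℂ) = w from rfl, Complex.measurableEquivRealProd_symm_apply,
            perp, hωdef, Prod.ext_iff, Prod.fst_add, Prod.snd_add, Prod.smul_fst, Prod.smul_snd,
            Complex.mul_re, Complex.mul_im, smul_eq_mul]
          constructor <;> ring
        rw [hgdef]
        simp only []
        rw [harg]
      rw [h1, h2, Circle.smul_def, smul_eq_mul]
    have hP' : Integrable (fun p : ℝ × ℝ =>
        (Real.fourierChar (-(p.1 * r)) : ℂ) * f ((-p.1) • perp (perp ω) + p.2 • perp ω)) :=
      hP.congr (Filter.Eventually.of_forall point)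
    calc 𝓕 g ξ = ∫ z : ℂ, Real.fourierChar (-⟪z, ξ⟫) • g z := Real.fourier_eq g ξ
      _ = ∫ p : ℝ × ℝ, Real.fourierChar (-⟪Θ p, ξ⟫) • g (Θ p) := (mp.integral_comp emb _).symm
      _ = ∫ p : ℝ × ℝ,
            (Real.fourierChar (-(p.1 * r)) : ℂ) * f ((-p.1) • perp (perp ω) + p.2 • perp ω) :=
          integral_congr_ae (Filter.Eventually.of_forall point)
      _ = ∫ s : ℝ, ∫ t : ℝ,
            (Real.fourierChar (-(s * r)) : ℂ) * f ((-s) • perp (perp ω) + t • perp ω) :=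
          integral_prod _ hP'
      _ = ∫ s : ℝ, (Real.fourierChar (-(s * r)) : ℂ) * radonTransform f (-s) (perp ω) := by
          refine integral_congr_ae (Filter.Eventually.of_forall fun s => ?_)
          simp only [radonTransform, ← integral_const_mul]
      _ = 0 := by
          refine integral_eq_zero_of_ae (Filter.Eventually.of_forall fun s => ?_)
          simp only [Pi.zero_apply]
          rw [h (-s) (perp ω) hω1, mul_zero]
  have hF : 𝓕 g = 0 := funext key
  have hginv : Integrable (𝓕 g) := by rw [hF]; exact integrable_zero _ _ _
  have hinv : 𝓕⁻ (𝓕 g) = g := hgc.fourierInv_fourier_eq hgint hginv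
  have hg0 : g = 0 := by
    rw [← hinv, hF]
    funext ξ
    simp [Real.fourierInv_eq]
  funext p
  have := congrFun hg0 (Complex.measurableEquivRealProd.symm p)
  simpa [hgdef] using this
end

section
/- On a compact oriented two-dimensional Riemannian manifold (M,g) with smooth boundary, for every u ∈ C_c^∞(SM^int) the Pestov identity holds: ‖VXu‖² = ‖XVu‖² - (K Vu, Vu) + ‖Xu‖², where norms and inner products are in L²(SM). -/
open scoped RealInnerProductSpace

/-!
Both `‖VXu‖²` and `‖XVu‖²` are quadratic forms of the adjoint pair `VX`, `XV`, so their
difference is the quadratic form of the commutator `[XV, VX] = XVVX - VXXV`. The structure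
equations reduce this commutator to `-X² + VKV`, whose quadratic form is
`‖Xu‖² - ⟪KVu, Vu⟫` by skew-adjointness of `X` and `V`.
-/

theorem commutator_mul_eq_of_structure_equations {R : Type*} [Ring R] {X V Xp K : R}
    (c1 : X * V - V * X = Xp) (c2 : V * Xp - Xp * V = X) (c3 : X * Xp - Xp * X = -(K * V)) :
    X * V * (V * X) - V * X * (X * V) = -(X * X) + V * K * V :=
  calc X * V * (V * X) - V * X * (X * V)
      = (X * V - V * X) * (V * X) - V * X * (X * V - V * X) := by noncomm_ring
    _ = -((V * Xp - Xp * V) * X) - V * (X * Xp - Xp * X) := by rw [c1]; noncomm_ring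
    _ = -(X * X) + V * K * V := by rw [c2, c3]; noncomm_ring

theorem inner_apply_apply_eq_of_skew {E : Type*} [NormedAddCommGroup E] [InnerProductSpace ℝ E]
    {A B : E →ₗ[ℝ] E} (hA : ∀ u w : E, ⟪A u, w⟫ = -⟪u, A w⟫)
    (hB : ∀ u w : E, ⟪B u, w⟫ = -⟪u, B w⟫) (v w : E) :
    ⟪A (B v), w⟫ = ⟪v, B (A w)⟫ := by
  rw [hA, hB, neg_neg]

theorem pestov_identity_general
    {E : Type*} [NormedAddCommGroup E] [InnerProductSpace ℝ E]
    (X V Xp K : E →ₗ[ℝ] E)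
    (hX : ∀ u w : E, ⟪X u, w⟫ = -⟪u, X w⟫)
    (hV : ∀ u w : E, ⟪V u, w⟫ = -⟪u, V w⟫)
    (c1 : X ∘ₗ V - V ∘ₗ X = Xp)
    (c2 : V ∘ₗ Xp - Xp ∘ₗ V = X)
    (c3 : X ∘ₗ Xp - Xp ∘ₗ X = -(K ∘ₗ V))
    (u : E) :
    ‖V (X u)‖ ^ 2 = ‖X (V u)‖ ^ 2 - ⟪K (V u), V u⟫ + ‖X u‖ ^ 2 := by
  have hcomm : X * V * (V * X) - V * X * (X * V) = -(X * X) + V * K * V :=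
    commutator_mul_eq_of_structure_equations c1 c2 c3
  have hquad := congrArg (fun T : Module.End ℝ E => ⟪T u, u⟫) hcomm
  simp only [LinearMap.sub_apply, LinearMap.add_apply, LinearMap.neg_apply,
    Module.End.mul_apply, inner_sub_left, inner_add_left, inner_neg_left] at hquad
  rw [inner_apply_apply_eq_of_skew hX hV (V (X u)), inner_apply_apply_eq_of_skew hV hX (X (V u)),
    hX (X u) u, hV (K (V u))] at hquad
  simp only [← real_inner_self_eq_norm_sq]
  linarith

/-- The Pestov identity. Here `X`, `V`, `Xp = X_⊥` are the geodesic, vertical and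
perpendicular vector fields acting on smooth functions on the unit sphere bundle `SM`
of a compact oriented 2D Riemannian manifold with boundary, regarded as skew-adjoint
operators in `L²(SM)` (on functions compactly supported in the interior), `K` is
multiplication by the Gaussian curvature, and the structure equations
`[X,V] = X_⊥`, `[V,X_⊥] = X`, `[X,X_⊥] = -KV` hold. Then for every such `u`:
`‖VXu‖² = ‖XVu‖² - (KVu, Vu) + ‖Xu‖²`. -/
theorem pestov_identity
    {E : Type*} [NormedAddCommGroup E] [InnerProductSpace ℝ E]
    (X V Xp K : E →ₗ[ℝ] E)
    (hX : ∀ u w : E, ⟪X u, w⟫ = -⟪u, X w⟫)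
    (hV : ∀ u w : E, ⟪V u, w⟫ = -⟪u, V w⟫)
    (hXp : ∀ u w : E, ⟪Xp u, w⟫ = -⟪u, Xp w⟫)
    (hK : ∀ u w : E, ⟪K u, w⟫ = ⟪u, K w⟫)
    (c1 : X ∘ₗ V - V ∘ₗ X = Xp)
    (c2 : V ∘ₗ Xp - Xp ∘ₗ V = X)
    (c3 : X ∘ₗ Xp - Xp ∘ₗ X = -(K ∘ₗ V))
    (u : E) :
    ‖V (X u)‖ ^ 2 = ‖X (V u)‖ ^ 2 - ⟪K (V u), V u⟫ + ‖X u‖ ^ 2 :=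
  pestov_identity_general X V Xp K hX hV c1 c2 c3 u
end

section
/- Let F: [0,T] → M_n(ℝ) be a continuous symmetric-matrix-valued function and let H₀ be a complex symmetric n×n matrix with positive definite imaginary part. Let (Z(t), Y(t)) solve the linear system Ż = F Y, Ẏ = Z with Z(0) = H₀, Y(0) = I. Then Y(t) is invertible for all t ∈ [0,T]. -/
open Matrix
attribute [local instance] Matrix.normedAddCommGroup Matrix.normedSpace

/-!
Since `F` is real symmetric, the Wronskian `W = Yᴴ Z - Zᴴ Y` has derivative
`Yᴴ F Y - (F Y)ᴴ Y = 0`, so `W(t) = W(0) = H₀ - H₀ᴴ = 2i · Im H₀`. If `Y(t) v = 0`, then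
`vᴴ W(t) v = (Y v)ᴴ Z v - (Z v)ᴴ Y v = 0`, whereas `vᴴ (Im H₀) v` has positive real part
for `v ≠ 0`.
-/

theorem HasDerivAt.matrix_mul {𝕜 R l m p : Type*} [NontriviallyNormedField 𝕜] [NormedRing R]
    [NormedAlgebra 𝕜 R] [Fintype l] [Fintype m] [Fintype p] {A : 𝕜 → Matrix l m R}
    {B : 𝕜 → Matrix m p R} {A' : Matrix l m R} {B' : Matrix m p R} {x : 𝕜}
    (hA : HasDerivAt A A' x) (hB : HasDerivAt B B' x) :
    HasDerivAt (fun t => A t * B t) (A' * B x + A x * B') x := by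
  refine hasDerivAt_pi.2 fun i => hasDerivAt_pi.2 fun j => ?_
  simp only [Matrix.add_apply, mul_apply, ← Finset.sum_add_distrib]
  exact HasDerivAt.fun_sum fun k _ =>
    (hasDerivAt_pi.1 (hasDerivAt_pi.1 hA i) k).fun_mul (hasDerivAt_pi.1 (hasDerivAt_pi.1 hB k) j)

namespace Matrix

theorem IsSymm.sub_conjTranspose {n 𝕜 : Type*} [RCLike 𝕜] {H : Matrix n n 𝕜}
    (hH : H.IsSymm) : H - Hᴴ = (2 * RCLike.I : 𝕜) • (H.map RCLike.im).map (↑) := by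
  ext i j
  simp [conjTranspose_apply, hH.apply i j, RCLike.sub_conj]
  ring

variable {n 𝕜 : Type*} [Fintype n] [RCLike 𝕜]

theorem re_star_dotProduct_map_ofReal_mulVec (B : Matrix n n ℝ) (v : n → 𝕜) :
    RCLike.re (star v ⬝ᵥ (B.map (↑) *ᵥ v)) =
      (fun i => RCLike.re (v i)) ⬝ᵥ (B *ᵥ fun i => RCLike.re (v i)) +
        (fun i => RCLike.im (v i)) ⬝ᵥ (B *ᵥ fun i => RCLike.im (v i)) := by
  simp only [dotProduct, mulVec, Finset.mul_sum, map_sum, ← Finset.sum_add_distrib]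
  refine Finset.sum_congr rfl fun i _ => Finset.sum_congr rfl fun j _ => ?_
  simp only [Pi.star_apply, map_apply, RCLike.star_def, RCLike.mul_re, RCLike.conj_re,
    RCLike.conj_im, RCLike.ofReal_re, RCLike.ofReal_im, RCLike.mul_im]
  ring

theorem PosDef.re_star_dotProduct_map_ofReal_mulVec_pos {B : Matrix n n ℝ} (hB : B.PosDef)
    {v : n → 𝕜} (hv : v ≠ 0) : 0 < RCLike.re (star v ⬝ᵥ (B.map (↑) *ᵥ v)) := by
  rw [re_star_dotProduct_map_ofReal_mulVec]
  have hx := hB.posSemidef.dotProduct_mulVec_nonneg fun i => RCLike.re (v i)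
  have hy := hB.posSemidef.dotProduct_mulVec_nonneg fun i => RCLike.im (v i)
  simp only [star_trivial] at hx hy
  by_cases hre : (fun i => RCLike.re (v i)) = 0
  · have him : (fun i => RCLike.im (v i)) ≠ 0 := fun him =>
      hv <| funext fun i =>
        RCLike.ext (by simpa using congrFun hre i) (by simpa using congrFun him i)
    simpa using add_pos_of_nonneg_of_pos hx (hB.dotProduct_mulVec_pos him)
  · simpa using add_pos_of_pos_of_nonneg (hB.dotProduct_mulVec_pos hre) hy

def wronskian (Y Z : Matrix n n 𝕜) : Matrix n n 𝕜 := Yᴴ * Z - Zᴴ * Y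

theorem wronskian_one_left [DecidableEq n] (Z : Matrix n n 𝕜) : wronskian 1 Z = Z - Zᴴ := by
  simp [wronskian]

theorem star_dotProduct_wronskian_mulVec_eq_zero {Y Z : Matrix n n 𝕜} {v : n → 𝕜}
    (hv : Y *ᵥ v = 0) : star v ⬝ᵥ (wronskian Y Z *ᵥ v) = 0 := by
  rw [wronskian, sub_mulVec, ← mulVec_mulVec, ← mulVec_mulVec, hv, mulVec_zero, sub_zero,
    dotProduct_mulVec, ← star_mulVec, hv, star_zero, zero_dotProduct]

theorem hasDerivAt_wronskian {Y Z : ℝ → Matrix n n 𝕜} {G : Matrix n n 𝕜} {t : ℝ}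
    (hG : G.IsHermitian) (hY : HasDerivAt Y (Z t) t) (hZ : HasDerivAt Z (G * Y t) t) :
    HasDerivAt (fun s => wronskian (Y s) (Z s)) 0 t := by
  refine ((hY.star.matrix_mul hZ).sub (hZ.star.matrix_mul hY)).congr_deriv ?_
  simp only [star_eq_conjTranspose, conjTranspose_mul, hG.eq, Matrix.mul_assoc]
  abel

theorem wronskian_eq_of_hasDerivAt {Y Z G : ℝ → Matrix n n 𝕜} {T : ℝ}
    (hG : ∀ t ∈ Set.Icc 0 T, (G t).IsHermitian) (hY : ∀ t ∈ Set.Icc 0 T, HasDerivAt Y (Z t) t)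
    (hZ : ∀ t ∈ Set.Icc 0 T, HasDerivAt Z (G t * Y t) t) :
    ∀ t ∈ Set.Icc 0 T, wronskian (Y t) (Z t) = wronskian (Y 0) (Z 0) := by
  have hW t ht := hasDerivAt_wronskian (hG t ht) (hY t ht) (hZ t ht)
  exact constant_of_has_deriv_right_zero (fun t ht => (hW t ht).continuousAt.continuousWithinAt)
    fun t ht => (hW t (Set.Ico_subset_Icc_self ht)).hasDerivWithinAt

end Matrix

theorem riccati_linearization_invertible_general {n : ℕ} {T : ℝ}
    (F : ℝ → Matrix (Fin n) (Fin n) ℝ)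
    (hFsym : ∀ t ∈ Set.Icc (0:ℝ) T, (F t)ᵀ = F t)
    (H₀ : Matrix (Fin n) (Fin n) ℂ)
    (hH₀sym : H₀ᵀ = H₀)
    (hH₀im : (H₀.map Complex.im).PosDef)
    (Z Y : ℝ → Matrix (Fin n) (Fin n) ℂ)
    (hZ : ∀ t ∈ Set.Icc (0:ℝ) T, HasDerivAt Z ((F t).map (fun x : ℝ => (x : ℂ)) * Y t) t)
    (hY : ∀ t ∈ Set.Icc (0:ℝ) T, HasDerivAt Y (Z t) t)
    (hZ0 : Z 0 = H₀) (hY0 : Y 0 = 1) :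
    ∀ t ∈ Set.Icc (0:ℝ) T, IsUnit (Y t) := by
  have hF t ht : ((F t).map (fun x : ℝ => (x : ℂ))).IsHermitian :=
    (isHermitian_iff_isSymm.2 (hFsym t ht)).map _ fun x => (Complex.conj_ofReal x).symm
  intro t ht
  rw [isUnit_iff_isUnit_det, isUnit_iff_ne_zero]
  intro hdet
  obtain ⟨v, hv, hYv⟩ := exists_mulVec_eq_zero_iff.2 hdet
  have hW : wronskian (Y t) (Z t) = H₀ - H₀ᴴ := by
    rw [wronskian_eq_of_hasDerivAt hF hY hZ t ht, hY0, hZ0, wronskian_one_left]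
  have h := star_dotProduct_wronskian_mulVec_eq_zero (Z := Z t) hYv
  rw [hW, IsSymm.sub_conjTranspose hH₀sym, smul_mulVec, dotProduct_smul, smul_eq_mul,
    mul_eq_zero] at h
  rcases h with hI | hq
  · simp at hI
  · exact (hH₀im.re_star_dotProduct_map_ofReal_mulVec_pos hv).ne'
      ((congrArg RCLike.re hq).trans (map_zero _))

/-- For the linear system `Ż = FY`, `Ẏ = Z` with `F` continuous, real and symmetric,
`Z(0) = H₀` complex symmetric with positive definite imaginary part and `Y(0) = I`,
the matrix `Y(t)` is invertible for all `t ∈ [0,T]`. -/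
theorem riccati_linearization_invertible {n : ℕ} {T : ℝ} (hT : 0 ≤ T)
    (F : ℝ → Matrix (Fin n) (Fin n) ℝ)
    (hFc : ContinuousOn F (Set.Icc 0 T))
    (hFsym : ∀ t ∈ Set.Icc (0:ℝ) T, (F t)ᵀ = F t)
    (H₀ : Matrix (Fin n) (Fin n) ℂ)
    (hH₀sym : H₀ᵀ = H₀)
    (hH₀im : (H₀.map Complex.im).PosDef)
    (Z Y : ℝ → Matrix (Fin n) (Fin n) ℂ)
    (hZ : ∀ t ∈ Set.Icc (0:ℝ) T, HasDerivAt Z ((F t).map (fun x : ℝ => (x : ℂ)) * Y t) t)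
    (hY : ∀ t ∈ Set.Icc (0:ℝ) T, HasDerivAt Y (Z t) t)
    (hZ0 : Z 0 = H₀) (hY0 : Y 0 = 1) :
    ∀ t ∈ Set.Icc (0:ℝ) T, IsUnit (Y t) :=
  riccati_linearization_invertible_general F hFsym H₀ hH₀sym hH₀im Z Y hZ hY hZ0 hY0
end

section
/- In the scalar case, if F: [0,T] → ℝ is continuous and H₀ ∈ ℂ with Im(H₀) > 0, then the solution H(t) of the Riccati equation Ḣ + H² = F with H(0) = H₀ exists on all of [0,T] and satisfies Im(H(t)) > 0 for all t. -/
/-!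
Writing `H = z / y` turns the Riccati equation into the linear system `z' = F y`, `y' = z`, which
has a solution on all of `[0, T]`. Since `F` is real, `Im (conj y * z)` is conserved, so it stays
equal to `Im H₀ > 0`; hence `y` never vanishes and `Im H = Im (conj y * z) / |y|² > 0`.
-/

open Set ComplexConjugate
open scoped NNReal

section LinearODE

variable {E : Type*} [NormedAddCommGroup E] [NormedSpace ℝ E]

theorem exists_hasDerivWithinAt_Icc_glue (v : ℝ → E → E) {a b c : ℝ} (hab : a ≤ b) (hbc : b ≤ c)
    {f g : ℝ → E} (hfg : f b = g b)
    (hf : ∀ t ∈ Icc a b, HasDerivWithinAt f (v t (f t)) (Icc a b) t)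
    (hg : ∀ t ∈ Icc b c, HasDerivWithinAt g (v t (g t)) (Icc b c) t) :
    ∃ h : ℝ → E, h a = f a ∧ ∀ t ∈ Icc a c, HasDerivWithinAt h (v t (h t)) (Icc a c) t := by
  classical
  set h : ℝ → E := fun t ↦ if t ≤ b then f t else g t
  have hf_eq : EqOn h f (Icc a b) := fun t ht ↦ if_pos ht.2
  have hg_eq : EqOn h g (Icc b c) := fun t ht ↦ by
    rcases ht.1.eq_or_lt with rfl | hbt
    · exact (if_pos le_rfl).trans hfg
    · exact if_neg hbt.not_ge
  refine ⟨h, hf_eq ⟨le_rfl, hab⟩, fun t ht ↦ ?_⟩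
  rw [← Icc_union_Icc_eq_Icc hab hbc]
  refine HasDerivWithinAt.union ?_ ?_
  · by_cases htb : t ≤ b
    · have hmem : t ∈ Icc a b := ⟨ht.1, htb⟩
      exact hf_eq hmem ▸ (hf t hmem).congr_of_mem hf_eq hmem
    · refine HasFDerivWithinAt.of_notMem_closure ?_
      rw [closure_Icc]
      exact fun hmem ↦ htb hmem.2
  · by_cases hbt : b ≤ t
    · have hmem : t ∈ Icc b c := ⟨hbt, ht.2⟩
      exact hg_eq hmem ▸ (hg t hmem).congr_of_mem hg_eq hmem
    · refine HasFDerivWithinAt.of_notMem_closure ?_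
      rw [closure_Icc]
      exact fun hmem ↦ hbt hmem.1

variable [CompleteSpace E]

theorem exists_hasDerivWithinAt_clm_of_two_mul_norm_mul_le_one {A : ℝ → E →L[ℝ] E} {a b : ℝ}
    (hab : a ≤ b) (hA : ContinuousOn A (Icc a b)) {K : ℝ≥0} (hK : ∀ t ∈ Icc a b, ‖A t‖ ≤ K)
    (hδ : 2 * K * (b - a) ≤ 1) (x₀ : E) :
    ∃ x : ℝ → E, x a = x₀ ∧ ∀ t ∈ Icc a b, HasDerivWithinAt x (A t (x t)) (Icc a b) t := by
  have hpl : IsPicardLindelof (fun t x ↦ A t x) (⟨a, le_rfl, hab⟩ : Icc a b) x₀ ‖x₀‖₊ 0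
      (2 * K * ‖x₀‖₊) K := by
    refine ⟨fun t ht ↦ ?_, fun x _ ↦ hA.clm_apply continuousOn_const, fun t ht x hx ↦ ?_, ?_⟩
    · exact ((A t).lipschitz.weaken (by exact_mod_cast hK t ht)).lipschitzOnWith
    · have hx' : ‖x‖ ≤ 2 * ‖x₀‖ := by
        have := norm_le_norm_add_norm_sub' x x₀
        rw [mem_closedBall_iff_norm] at hx
        push_cast at hx
        linarith
      calc ‖A t x‖ ≤ ‖A t‖ * ‖x‖ := (A t).le_opNorm x
        _ ≤ K * (2 * ‖x₀‖) := by gcongr; exact hK t ht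
        _ = _ := by push_cast; ring
    · push_cast
      rw [sub_self, max_eq_left (by linarith), sub_zero]
      nlinarith [norm_nonneg x₀]
  exact hpl.exists_eq_forall_mem_Icc_hasDerivWithinAt₀

/-- Solutions of a linear equation cannot blow up: the local existence time only depends on a
bound for `‖A t‖`, so finitely many local solutions can be glued together. -/
theorem exists_hasDerivWithinAt_clm {A : ℝ → E →L[ℝ] E} {a b : ℝ} (hab : a ≤ b)
    (hA : ContinuousOn A (Icc a b)) (x₀ : E) :
    ∃ x : ℝ → E, x a = x₀ ∧ ∀ t ∈ Icc a b, HasDerivWithinAt x (A t (x t)) (Icc a b) t := by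
  obtain ⟨C, hC⟩ := isCompact_Icc.exists_bound_of_continuousOn hA
  set K : ℝ≥0 := C.toNNReal
  have hK : ∀ t ∈ Icc a b, ‖A t‖ ≤ K := fun t ht ↦ (hC t ht).trans (Real.le_coe_toNNReal C)
  set ε : ℝ := 1 / (2 * K + 1)
  have hε : 0 < ε := by positivity
  have hKε : 2 * K * ε ≤ 1 := by
    rw [mul_one_div, div_le_one (by positivity)]
    linarith
  have exists_on_Icc : ∀ n : ℕ, ∀ c ∈ Icc a b, c ≤ a + n * ε → ∃ x : ℝ → E, x a = x₀ ∧
      ∀ t ∈ Icc a c, HasDerivWithinAt x (A t (x t)) (Icc a c) t := by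
    intro n
    induction n with
    | zero =>
      intro c hc hca
      obtain rfl : c = a := le_antisymm (by simpa using hca) hc.1
      exact exists_hasDerivWithinAt_clm_of_two_mul_norm_mul_le_one le_rfl
        (hA.mono (Icc_subset_Icc le_rfl hc.2)) (fun t ht ↦ hK t ⟨ht.1, ht.2.trans hc.2⟩)
        (by simp) x₀
    | succ n ih =>
      intro c hc hca
      set c' := max a (c - ε)
      have hc'c : c' ≤ c := max_le hc.1 (by linarith)
      obtain ⟨x, hx₀, hx⟩ := ih c' ⟨le_max_left _ _, hc'c.trans hc.2⟩
        (max_le (by nlinarith) (by push_cast at hca; linarith))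
      have hsub : Icc c' c ⊆ Icc a b := Icc_subset_Icc (le_max_left _ _) hc.2
      obtain ⟨y, hy₀, hy⟩ := exists_hasDerivWithinAt_clm_of_two_mul_norm_mul_le_one hc'c
        (hA.mono hsub) (fun t ht ↦ hK t (hsub ht))
        (hKε.trans' (by gcongr; linarith [le_max_right a (c - ε)])) (x c')
      obtain ⟨z, hz₀, hz⟩ := exists_hasDerivWithinAt_Icc_glue (fun t x ↦ A t x)
        (le_max_left _ _) hc'c hy₀.symm hx hy
      exact ⟨z, hz₀.trans hx₀, hz⟩
  obtain ⟨n, hn⟩ := exists_nat_ge ((b - a) / ε)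
  exact exists_on_Icc n b ⟨hab, le_rfl⟩ (by rw [div_le_iff₀ hε] at hn; linarith)

end LinearODE

section Riccati

variable {F : ℝ → ℝ} {z y : ℝ → ℂ}

noncomputable def riccatiLinearization (F : ℝ → ℝ) (t : ℝ) : ℂ × ℂ →L[ℝ] ℂ × ℂ :=
  F t • (ContinuousLinearMap.inl ℝ ℂ ℂ ∘L ContinuousLinearMap.snd ℝ ℂ ℂ) +
    ContinuousLinearMap.inr ℝ ℂ ℂ ∘L ContinuousLinearMap.fst ℝ ℂ ℂ

@[simp]
theorem riccatiLinearization_apply (t : ℝ) (p : ℂ × ℂ) :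
    riccatiLinearization F t p = ((F t : ℂ) * p.2, p.1) := by
  ext <;> simp [riccatiLinearization, Complex.real_smul]

theorem continuousOn_riccatiLinearization {s : Set ℝ} (hF : ContinuousOn F s) :
    ContinuousOn (riccatiLinearization F) s :=
  (hF.smul continuousOn_const).add continuousOn_const

theorem HasDerivWithinAt.div_of_riccatiLinearization {s : Set ℝ} {t : ℝ}
    (hz : HasDerivWithinAt z (F t * y t) s t) (hy : HasDerivWithinAt y (z t) s t)
    (hyt : y t ≠ 0) :
    HasDerivWithinAt (fun t ↦ z t / y t) ((F t : ℂ) - (z t / y t) ^ 2) s t :=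
  (hz.div hy hyt).congr_deriv (by field_simp)

/-- The derivative of `conj y * z` is the real number `|z|² + F |y|²`. -/
theorem im_conj_mul_eq_of_hasDerivWithinAt {a b : ℝ}
    (hz : ∀ t ∈ Icc a b, HasDerivWithinAt z (F t * y t) (Icc a b) t)
    (hy : ∀ t ∈ Icc a b, HasDerivWithinAt y (z t) (Icc a b) t) :
    ∀ t ∈ Icc a b, (conj (y t) * z t).im = (conj (y a) * z a).im := by
  have hderiv : ∀ t ∈ Icc a b,
      HasDerivWithinAt (fun t ↦ (conj (y t) * z t).im) 0 (Icc a b) t := by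
    intro t ht
    have h := Complex.imCLM.hasFDerivAt.comp_hasDerivWithinAt t ((hy t ht).star.mul (hz t ht))
    refine h.congr_deriv ?_
    simp [Complex.mul_im, Complex.mul_re]
    ring
  intro t ht
  simpa [sub_eq_zero] using norm_image_sub_le_of_norm_deriv_le_segment' hderiv
    (fun _ _ ↦ norm_zero.le) t ht

end Riccati

/-- The scalar Riccati equation `Ḣ + H² = F`, `H(0) = H₀` with `F : [0,T] → ℝ`
continuous and `Im H₀ > 0` has a solution on all of `[0,T]`, which moreover satisfies
`Im H(t) > 0` for all `t ∈ [0,T]`. -/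
theorem scalar_riccati_global_solution {T : ℝ} (hT : 0 ≤ T)
    (F : ℝ → ℝ) (hFc : ContinuousOn F (Set.Icc 0 T))
    (H₀ : ℂ) (hH₀ : 0 < H₀.im) :
    ∃ H : ℝ → ℂ, H 0 = H₀ ∧
      ∀ t ∈ Set.Icc (0:ℝ) T,
        HasDerivWithinAt H ((F t : ℂ) - H t ^ 2) (Set.Icc 0 T) t ∧ 0 < (H t).im := by
  obtain ⟨w, hw₀, hw⟩ := exists_hasDerivWithinAt_clm hT (continuousOn_riccatiLinearization hFc)
    ((H₀, 1) : ℂ × ℂ)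
  set z : ℝ → ℂ := fun t ↦ (w t).1
  set y : ℝ → ℂ := fun t ↦ (w t).2
  have hz : ∀ t ∈ Icc 0 T, HasDerivWithinAt z (F t * y t) (Icc 0 T) t := fun t ht ↦ by
    have h := hasFDerivAt_fst.comp_hasDerivWithinAt t (hw t ht)
    simp only [riccatiLinearization_apply, ContinuousLinearMap.coe_fst'] at h
    exact h
  have hy : ∀ t ∈ Icc 0 T, HasDerivWithinAt y (z t) (Icc 0 T) t := fun t ht ↦ by
    have h := hasFDerivAt_snd.comp_hasDerivWithinAt t (hw t ht)
    simp only [riccatiLinearization_apply, ContinuousLinearMap.coe_snd'] at h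
    exact h
  have hinv : ∀ t ∈ Icc 0 T, (conj (y t) * z t).im = H₀.im := by
    simpa [z, y, hw₀] using im_conj_mul_eq_of_hasDerivWithinAt hz hy
  have hy_ne : ∀ t ∈ Icc 0 T, y t ≠ 0 := fun t ht hyt ↦ by
    simpa [hyt, hH₀.ne] using hinv t ht
  refine ⟨fun t ↦ z t / y t, by simp [z, y, hw₀], fun t ht ↦
    ⟨(hz t ht).div_of_riccatiLinearization (hy t ht) (hy_ne t ht), ?_⟩⟩
  have him : (z t / y t).im = (conj (y t) * z t).im / Complex.normSq (y t) := by
    simp only [Complex.div_im, Complex.mul_im, Complex.conj_re, Complex.conj_im]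
    ring
  rw [him, hinv t ht]
  exact div_pos hH₀ (Complex.normSq_pos.2 (hy_ne t ht))
end
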